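/- Let Y ∈ ℝ^{N×T}, let Ω ⊆ {1,…,N}×{1,…,T}, and let λ*, λ1 > 0. Let X̄, Ō ∈ ℝ^{N×T} with Ō_{n,t} = 0 for all (n,t) ∉ Ω, and set R = P_Ω(Y − X̄ − Ō). Suppose that (i) the spectral norm satisfies ‖R‖₂ ≤ λ*, (ii) ⟨R, X̄⟩ = λ*‖X̄‖_*, (iii) |R_{n,t}| ≤ λ1 for every (n,t), and (iv) R_{n,t} = λ1·sign(Ō_{n,t}) for every (n,t) with Ō_{n,t} ≠ 0. Then (X̄, Ō) is a global minimizer of the PCP objective, i.e., (1/2)‖P_Ω(Y−X̄−Ō)‖_F² + λ*‖X̄‖_* + λ1‖Ō‖₁ ≤ (1/2)‖P_Ω(Y−X−O)‖_F² + λ*‖X‖_* + λ1‖O‖₁ for all X, O ∈ ℝ^{N×T}. -/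

import Mathlib

open Matrix

/-!
Write `R = P_Ω(Y − X̄ − Ō)`. Since `R` is supported on `Ω`, expanding the square gives
`½‖P_Ω(Y − X − O)‖_F² ≥ ½‖R‖_F² + ⟨R, (X̄ − X) + (Ō − O)⟩` for all `X`, `O`. The hypotheses say
that `R` is a scaled subgradient of both regularisers: `⟨R, X̄⟩ = λ*‖X̄‖_*`,
`⟨R, X⟩ ≤ ‖R‖₂‖X‖_* ≤ λ*‖X‖_*`, `⟨R, Ō⟩ = λ1‖Ō‖₁` and `⟨R, O⟩ ≤ λ1‖O‖₁`, which together give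
the claim.

The trace duality `⟨R, X⟩ ≤ ‖R‖₂‖X‖_*` comes from computing `tr(RᵀX)` in an orthonormal
eigenbasis `(vᵢ)` of `XᵀX`: each term is `⟨Rvᵢ, Xvᵢ⟩ ≤ ‖R‖₂‖Xvᵢ‖ = ‖R‖₂√μᵢ`.
-/

lemma transpose_mul_self_isHermitian {N T : ℕ} (X : Matrix (Fin N) (Fin T) ℝ) :
    (Xᵀ * X).IsHermitian := by
  have := Matrix.isHermitian_conjTranspose_mul_self X
  first
  | simpa [Matrix.conjTranspose_eq_transpose_of_trivial] using this
  | simpa [Matrix.conjTranspose, Matrix.map, starRingEnd_apply, star_trivial] using this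

/-- Nuclear norm: sum of singular values (square roots of eigenvalues of `XᵀX`). -/
noncomputable def nuclearNorm {N T : ℕ} (X : Matrix (Fin N) (Fin T) ℝ) : ℝ :=
  ∑ i, Real.sqrt ((transpose_mul_self_isHermitian X).eigenvalues i)

/-- Frobenius norm `‖X‖_F = √(trace (XᵀX))`. -/
noncomputable def frobeniusNorm {N T : ℕ} (X : Matrix (Fin N) (Fin T) ℝ) : ℝ :=
  Real.sqrt (Matrix.trace (Xᵀ * X))

/-- Entrywise ℓ1-norm `‖X‖₁ = ∑_{n,t} |x_{nt}|`. -/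
noncomputable def l1Norm {N T : ℕ} (X : Matrix (Fin N) (Fin T) ℝ) : ℝ :=
  ∑ n, ∑ t, |X n t|

/-- Sampling operator `P_Ω`: keeps entries indexed by `Ω` and zeroes out the rest. -/
def sampling {N T : ℕ} (Ω : Finset (Fin N × Fin T)) (X : Matrix (Fin N) (Fin T) ℝ) :
    Matrix (Fin N) (Fin T) ℝ :=
  fun n t => if (n, t) ∈ Ω then X n t else 0

/-- The PCP objective `f(X,O) = (1/2)‖P_Ω(Y−X−O)‖_F² + λ*‖X‖_* + λ1‖O‖₁`. -/
noncomputable def pcpObjective {N T : ℕ} (Ω : Finset (Fin N × Fin T))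
    (Y : Matrix (Fin N) (Fin T) ℝ) (lamStar lam1 : ℝ)
    (X O : Matrix (Fin N) (Fin T) ℝ) : ℝ :=
  (1 / 2) * frobeniusNorm (sampling Ω (Y - X - O)) ^ 2 +
    lamStar * nuclearNorm X + lam1 * l1Norm O

/-- Spectral norm: largest singular value of `X`. -/
noncomputable def matSpectralNorm {N T : ℕ} (X : Matrix (Fin N) (Fin T) ℝ) : ℝ :=
  ⨆ i, Real.sqrt ((transpose_mul_self_isHermitian X).eigenvalues i)

/-- Frobenius inner product `⟨A,B⟩ = trace(AᵀB)`. -/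
noncomputable def frobInner {N T : ℕ} (A B : Matrix (Fin N) (Fin T) ℝ) : ℝ :=
  Matrix.trace (Aᵀ * B)

namespace Matrix

variable {m n α : Type*} [Fintype m] [Fintype n]

lemma dotProduct_le_sqrt_mul_sqrt (u w : n → ℝ) : u ⬝ᵥ w ≤ √(u ⬝ᵥ u) * √(w ⬝ᵥ w) := by
  simpa only [dotProduct, sq] using Real.sum_mul_le_sqrt_mul_sqrt Finset.univ u w

lemma dotProduct_transpose_mul_mulVec [CommSemiring α] (A B : Matrix m n α) (v : n → α) :
    v ⬝ᵥ ((Aᵀ * B) *ᵥ v) = (A *ᵥ v) ⬝ᵥ (B *ᵥ v) := by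
  rw [← mulVec_mulVec, dotProduct_mulVec, vecMul_transpose]

lemma trace_eq_sum_dotProduct_mulVec_of_mul_transpose_eq_one [CommSemiring α]
    [DecidableEq n] {V : Matrix n n α} (hV : V * Vᵀ = 1) (M : Matrix n n α) : trace M = ∑ i, Vᵀ i ⬝ᵥ (M *ᵥ Vᵀ i) := by
  calc trace M = trace (Vᵀ * M * V) := by rw [trace_mul_cycle, hV, Matrix.one_mul]
    _ = ∑ i, Vᵀ i ⬝ᵥ (M *ᵥ Vᵀ i) := by
      refine Finset.sum_congr rfl fun i _ => ?_
      rw [diag_apply, Matrix.mul_assoc, mul_apply]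
      rfl

namespace IsHermitian

variable [DecidableEq n] {B : Matrix n n ℝ} (hB : B.IsHermitian)

lemma eigenvectorUnitary_mul_transpose :
    (hB.eigenvectorUnitary : Matrix n n ℝ) * (hB.eigenvectorUnitary : Matrix n n ℝ)ᵀ = 1 := by
  simpa [star_eq_conjTranspose, conjTranspose_eq_transpose_of_trivial] using
    Unitary.coe_mul_star_self hB.eigenvectorUnitary

lemma transpose_mul_eigenvectorUnitary :
    (hB.eigenvectorUnitary : Matrix n n ℝ)ᵀ * (hB.eigenvectorUnitary : Matrix n n ℝ) = 1 := by
  simpa [star_eq_conjTranspose, conjTranspose_eq_transpose_of_trivial] using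
    Unitary.coe_star_mul_self hB.eigenvectorUnitary

lemma eq_eigenvectorUnitary_mul_diagonal_mul_transpose :
    B = (hB.eigenvectorUnitary : Matrix n n ℝ) * diagonal hB.eigenvalues
      * (hB.eigenvectorUnitary : Matrix n n ℝ)ᵀ := by
  simpa [star_eq_conjTranspose, conjTranspose_eq_transpose_of_trivial, Function.comp_def,
    Unitary.conjStarAlgAut_apply] using hB.spectral_theorem

lemma dotProduct_mulVec_le {c : ℝ} (hc : ∀ i, hB.eigenvalues i ≤ c) (v : n → ℝ) :
    v ⬝ᵥ (B *ᵥ v) ≤ c * (v ⬝ᵥ v) := by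
  set U : Matrix n n ℝ := ↑hB.eigenvectorUnitary
  set w := Uᵀ *ᵥ v
  have hquad : v ⬝ᵥ (B *ᵥ v) = w ⬝ᵥ (diagonal hB.eigenvalues *ᵥ w) := by
    conv_lhs => rw [hB.eq_eigenvectorUnitary_mul_diagonal_mul_transpose]
    rw [← mulVec_mulVec, ← mulVec_mulVec, dotProduct_mulVec, ← mulVec_transpose]
  have hnorm : w ⬝ᵥ w = v ⬝ᵥ v := by
    rw [dotProduct_mulVec, vecMul_transpose, mulVec_mulVec,
      hB.eigenvectorUnitary_mul_transpose, one_mulVec]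
  rw [hquad, ← hnorm]
  simp only [dotProduct, mulVec_diagonal, Finset.mul_sum]
  exact Finset.sum_le_sum fun i _ => by nlinarith [hc i, mul_self_nonneg (w i)]

end IsHermitian

end Matrix

section PCP

variable {N T : ℕ}

lemma frobInner_eq_sum (A B : Matrix (Fin N) (Fin T) ℝ) :
    frobInner A B = ∑ n, ∑ t, A n t * B n t := by
  simp only [frobInner, trace, diag, mul_apply, transpose_apply]
  exact Finset.sum_comm

lemma frobInner_comm (A B : Matrix (Fin N) (Fin T) ℝ) : frobInner A B = frobInner B A := by
  rw [frobInner, frobInner, ← trace_transpose, transpose_mul, transpose_transpose]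

lemma frobInner_add_right (A B C : Matrix (Fin N) (Fin T) ℝ) :
    frobInner A (B + C) = frobInner A B + frobInner A C := by
  rw [frobInner, frobInner, frobInner, Matrix.mul_add, trace_add]

lemma frobInner_sub_right (A B C : Matrix (Fin N) (Fin T) ℝ) :
    frobInner A (B - C) = frobInner A B - frobInner A C := by
  rw [frobInner, frobInner, frobInner, Matrix.mul_sub, trace_sub]

lemma frobeniusNorm_sq (A : Matrix (Fin N) (Fin T) ℝ) : frobeniusNorm A ^ 2 = frobInner A A := by
  have hnonneg : 0 ≤ frobInner A A := by
    rw [frobInner_eq_sum]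
    exact Finset.sum_nonneg fun n _ => Finset.sum_nonneg fun t _ => mul_self_nonneg _
  exact Real.sq_sqrt hnonneg

lemma frobeniusNorm_add_sq (A B : Matrix (Fin N) (Fin T) ℝ) :
    frobeniusNorm (A + B) ^ 2 = frobeniusNorm A ^ 2 + 2 * frobInner A B + frobeniusNorm B ^ 2 := by
  simp only [frobeniusNorm_sq, frobInner_add_right, frobInner_comm (A + B), frobInner_comm B A]
  ring

lemma sampling_add (Ω : Finset (Fin N × Fin T)) (A B : Matrix (Fin N) (Fin T) ℝ) :
    sampling Ω (A + B) = sampling Ω A + sampling Ω B := by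
  ext n t
  by_cases h : (n, t) ∈ Ω <;> simp [sampling, h]

lemma frobInner_sampling_sampling (Ω : Finset (Fin N × Fin T)) (A B : Matrix (Fin N) (Fin T) ℝ) :
    frobInner (sampling Ω A) (sampling Ω B) = frobInner (sampling Ω A) B := by
  simp only [frobInner_eq_sum, sampling]
  refine Finset.sum_congr rfl fun n _ => Finset.sum_congr rfl fun t _ => ?_
  split_ifs <;> simp

lemma frobInner_le_mul_l1Norm {R : Matrix (Fin N) (Fin T) ℝ} {c : ℝ}
    (hR : ∀ n t, |R n t| ≤ c) (O : Matrix (Fin N) (Fin T) ℝ) :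
    frobInner R O ≤ c * l1Norm O := by
  rw [frobInner_eq_sum, l1Norm, Finset.mul_sum]
  refine Finset.sum_le_sum fun n _ => ?_
  rw [Finset.mul_sum]
  refine Finset.sum_le_sum fun t _ => ?_
  calc R n t * O n t ≤ |R n t| * |O n t| := (le_abs_self _).trans (abs_mul _ _).le
    _ ≤ c * |O n t| := mul_le_mul_of_nonneg_right (hR n t) (abs_nonneg _)

lemma frobInner_eq_mul_l1Norm {R O : Matrix (Fin N) (Fin T) ℝ} {c : ℝ}
    (hR : ∀ n t, O n t ≠ 0 → R n t = c * Real.sign (O n t)) :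
    frobInner R O = c * l1Norm O := by
  rw [frobInner_eq_sum, l1Norm, Finset.mul_sum]
  refine Finset.sum_congr rfl fun n _ => ?_
  rw [Finset.mul_sum]
  refine Finset.sum_congr rfl fun t _ => ?_
  rcases lt_trichotomy (O n t) 0 with hneg | hzero | hpos
  · rw [hR n t hneg.ne, Real.sign_of_neg hneg, abs_of_neg hneg]; ring
  · simp [hzero]
  · rw [hR n t hpos.ne', Real.sign_of_pos hpos, abs_of_pos hpos]; ring

lemma nuclearNorm_nonneg (X : Matrix (Fin N) (Fin T) ℝ) : 0 ≤ nuclearNorm X :=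
  Finset.sum_nonneg fun _ _ => Real.sqrt_nonneg _

lemma matSpectralNorm_nonneg (R : Matrix (Fin N) (Fin T) ℝ) : 0 ≤ matSpectralNorm R :=
  Real.iSup_nonneg fun _ => Real.sqrt_nonneg _

lemma eigenvalues_le_matSpectralNorm_sq (R : Matrix (Fin N) (Fin T) ℝ) (i : Fin T) :
    (transpose_mul_self_isHermitian R).eigenvalues i ≤ matSpectralNorm R ^ 2 := by
  have hle : √((transpose_mul_self_isHermitian R).eigenvalues i) ≤ matSpectralNorm R :=
    le_ciSup (f := fun j => √((transpose_mul_self_isHermitian R).eigenvalues j))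
      (Set.finite_range _).bddAbove i
  exact (Real.sqrt_le_left ((Real.sqrt_nonneg _).trans hle)).mp hle

lemma mulVec_dotProduct_mulVec_self_le (R : Matrix (Fin N) (Fin T) ℝ) (v : Fin T → ℝ) :
    (R *ᵥ v) ⬝ᵥ (R *ᵥ v) ≤ matSpectralNorm R ^ 2 * (v ⬝ᵥ v) := by
  rw [← dotProduct_transpose_mul_mulVec]
  exact (transpose_mul_self_isHermitian R).dotProduct_mulVec_le
    (eigenvalues_le_matSpectralNorm_sq R) v

lemma frobInner_le_matSpectralNorm_mul_nuclearNorm (R X : Matrix (Fin N) (Fin T) ℝ) :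
    frobInner R X ≤ matSpectralNorm R * nuclearNorm X := by
  set hB := transpose_mul_self_isHermitian X
  set V : Matrix (Fin T) (Fin T) ℝ := ↑hB.eigenvectorUnitary
  have hunit (i : Fin T) : Vᵀ i ⬝ᵥ Vᵀ i = 1 :=
    (congr_fun₂ hB.transpose_mul_eigenvectorUnitary i i).trans (one_apply_eq i)
  have hR (i : Fin T) : √((R *ᵥ Vᵀ i) ⬝ᵥ (R *ᵥ Vᵀ i)) ≤ matSpectralNorm R := by
    rw [Real.sqrt_le_left (matSpectralNorm_nonneg R)]
    simpa [hunit i] using mulVec_dotProduct_mulVec_self_le R (Vᵀ i)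
  have hX (i : Fin T) : (X *ᵥ Vᵀ i) ⬝ᵥ (X *ᵥ Vᵀ i) = hB.eigenvalues i := by
    rw [← dotProduct_transpose_mul_mulVec, IsHermitian.eigenvectorUnitary_transpose_apply,
      hB.mulVec_eigenvectorBasis, dotProduct_smul, smul_eq_mul]
    exact (congrArg (hB.eigenvalues i * ·) (hunit i)).trans (mul_one _)
  calc frobInner R X = ∑ i, (R *ᵥ Vᵀ i) ⬝ᵥ (X *ᵥ Vᵀ i) := by
        rw [frobInner, trace_eq_sum_dotProduct_mulVec_of_mul_transpose_eq_one
          hB.eigenvectorUnitary_mul_transpose]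
        simp only [dotProduct_transpose_mul_mulVec, V]
    _ ≤ ∑ i, matSpectralNorm R * √(hB.eigenvalues i) := by
        refine Finset.sum_le_sum fun i _ => ?_
        rw [← hX i]
        exact (dotProduct_le_sqrt_mul_sqrt _ _).trans
          (mul_le_mul_of_nonneg_right (hR i) (Real.sqrt_nonneg _))
    _ = matSpectralNorm R * nuclearNorm X := by rw [nuclearNorm, Finset.mul_sum]

end PCP

theorem pcp_sufficient_optimality_general {N T : ℕ} (Ω : Finset (Fin N × Fin T))
    (Y : Matrix (Fin N) (Fin T) ℝ) (lamStar lam1 : ℝ)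
    (Xbar Obar : Matrix (Fin N) (Fin T) ℝ)
    (hspec : matSpectralNorm (sampling Ω (Y - Xbar - Obar)) ≤ lamStar)
    (hinner : frobInner (sampling Ω (Y - Xbar - Obar)) Xbar = lamStar * nuclearNorm Xbar)
    (hbound : ∀ (n : Fin N) (t : Fin T), |sampling Ω (Y - Xbar - Obar) n t| ≤ lam1)
    (hsign : ∀ (n : Fin N) (t : Fin T), Obar n t ≠ 0 →
      sampling Ω (Y - Xbar - Obar) n t = lam1 * Real.sign (Obar n t)) :
    ∀ X O : Matrix (Fin N) (Fin T) ℝ,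
      pcpObjective Ω Y lamStar lam1 Xbar Obar ≤ pcpObjective Ω Y lamStar lam1 X O := by
  intro X O
  set R := sampling Ω (Y - Xbar - Obar)
  set D := sampling Ω ((Xbar - X) + (Obar - O))
  have hresidual : sampling Ω (Y - X - O) = R + D := by
    rw [← sampling_add]
    congr 1
    abel
  have hcross : frobInner R D =
      (frobInner R Xbar - frobInner R X) + (frobInner R Obar - frobInner R O) := by
    rw [frobInner_sampling_sampling, frobInner_add_right, frobInner_sub_right,
      frobInner_sub_right]
  have hX : frobInner R X ≤ lamStar * nuclearNorm X :=
    (frobInner_le_matSpectralNorm_mul_nuclearNorm R X).trans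
      (mul_le_mul_of_nonneg_right hspec (nuclearNorm_nonneg X))
  have hO : frobInner R O ≤ lam1 * l1Norm O := frobInner_le_mul_l1Norm hbound O
  have hObar : frobInner R Obar = lam1 * l1Norm Obar := frobInner_eq_mul_l1Norm hsign
  rw [pcpObjective, pcpObjective, hresidual, frobeniusNorm_add_sq, hcross]
  linarith [sq_nonneg (frobeniusNorm D)]

/-- sufficient optimality conditions for PCP. If `Ō` vanishes off `Ω`,
`R = P_Ω(Y − X̄ − Ō)` satisfies `‖R‖₂ ≤ λ*`, `⟨R, X̄⟩ = λ*‖X̄‖_*`, `|R_{n,t}| ≤ λ1`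
everywhere and `R_{n,t} = λ1·sign(Ō_{n,t})` on the support of `Ō`, then `(X̄, Ō)` globally
minimizes the PCP objective. -/
theorem pcp_sufficient_optimality {N T : ℕ} (Ω : Finset (Fin N × Fin T))
    (Y : Matrix (Fin N) (Fin T) ℝ) (lamStar lam1 : ℝ)
    (hlamStar : 0 < lamStar) (hlam1 : 0 < lam1)
    (Xbar Obar : Matrix (Fin N) (Fin T) ℝ)
    (hOsupp : ∀ (n : Fin N) (t : Fin T), (n, t) ∉ Ω → Obar n t = 0)
    (hspec : matSpectralNorm (sampling Ω (Y - Xbar - Obar)) ≤ lamStar)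
    (hinner : frobInner (sampling Ω (Y - Xbar - Obar)) Xbar = lamStar * nuclearNorm Xbar)
    (hbound : ∀ (n : Fin N) (t : Fin T), |sampling Ω (Y - Xbar - Obar) n t| ≤ lam1)
    (hsign : ∀ (n : Fin N) (t : Fin T), Obar n t ≠ 0 →
      sampling Ω (Y - Xbar - Obar) n t = lam1 * Real.sign (Obar n t)) :
    ∀ X O : Matrix (Fin N) (Fin T) ℝ,
      pcpObjective Ω Y lamStar lam1 Xbar Obar ≤ pcpObjective Ω Y lamStar lam1 X O :=
  pcp_sufficient_optimality_general Ω Y lamStar lam1 Xbar Obar hspec hinner hbound hsign
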